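/- With φ₂ as above, for all paths p₁,p₂,p₃ ∈ P₀𝔤 one has the coherence identity: φ₂(p₁,[p₂,p₃]) + φ₂(p₂,[p₃,p₁]) + φ₂(p₃,[p₁,p₂]) = k⟨p₁(2π),[p₂(2π),p₃(2π)]⟩. -/

import Mathlib

/-- `φ₂(p₁,p₂) = k ∫₀^{2π} (⟨p₁,p₂'⟩ − ⟨p₁',p₂⟩) dθ`. -/
noncomputable def phiTwo {E : Type*} [NormedAddCommGroup E] [NormedSpace ℝ E]
    (B : E →ₗ[ℝ] E →ₗ[ℝ] ℝ) (k : ℝ) (p₁ p₂ : ℝ → E) : ℝ :=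
  k * ∫ θ in (0:ℝ)..(2 * Real.pi),
    (B (p₁ θ) (deriv p₂ θ) - B (deriv p₁ θ) (p₂ θ))

private lemma bilin_hasDerivAt {E F : Type*} [NormedAddCommGroup E] [NormedSpace ℝ E]
    [NormedAddCommGroup F] [NormedSpace ℝ F]
    (b : E →L[ℝ] E →L[ℝ] F) {f g : ℝ → E} {f' g' : E} {θ : ℝ}
    (hf : HasDerivAt f f' θ) (hg : HasDerivAt g g' θ) :
    HasDerivAt (fun t => b (f t) (g t)) (b f' (g θ) + b (f θ) g') θ := by
  have hc : HasDerivAt (fun t => b (f t)) (b f') θ :=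
    b.hasFDerivAt.comp_hasDerivAt θ hf
  exact hc.clm_apply hg

/-- the coherence identity
`φ₂(p₁,[p₂,p₃]) + φ₂(p₂,[p₃,p₁]) + φ₂(p₃,[p₁,p₂]) = k⟨p₁(2π),[p₂(2π),p₃(2π)]⟩`
for based paths in a Lie algebra with symmetric invariant bilinear form. -/
theorem phiTwo_coherence
    (E : Type*) [NormedAddCommGroup E] [NormedSpace ℝ E] [FiniteDimensional ℝ E]
    (br : E →ₗ[ℝ] E →ₗ[ℝ] E)
    (halt : ∀ x : E, br x x = 0)
    (hjac : ∀ x y z : E, br (br x y) z + br (br y z) x + br (br z x) y = 0)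
    (B : E →ₗ[ℝ] E →ₗ[ℝ] ℝ)
    (hsymm : ∀ x y : E, B x y = B y x)
    (hinv : ∀ x y z : E, B (br x y) z = B x (br y z))
    (k : ℝ)
    (p₁ p₂ p₃ : ℝ → E)
    (hp₁ : ContDiff ℝ (⊤ : ℕ∞) p₁) (hp₁0 : p₁ 0 = 0)
    (hp₂ : ContDiff ℝ (⊤ : ℕ∞) p₂) (hp₂0 : p₂ 0 = 0)
    (hp₃ : ContDiff ℝ (⊤ : ℕ∞) p₃) (hp₃0 : p₃ 0 = 0) :
    phiTwo B k p₁ (fun θ => br (p₂ θ) (p₃ θ))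
      + phiTwo B k p₂ (fun θ => br (p₃ θ) (p₁ θ))
      + phiTwo B k p₃ (fun θ => br (p₁ θ) (p₂ θ))
      = k * B (p₁ (2 * Real.pi)) (br (p₂ (2 * Real.pi)) (p₃ (2 * Real.pi))) := by
  -- continuous linear versions
  have hcyc : ∀ x y z : E, B x (br y z) = B y (br z x) := by
    intro x y z
    have h := hinv y z x
    rw [hsymm] at h
    exact h
  set brC : E →L[ℝ] E →L[ℝ] E :=
    LinearMap.toContinuousLinearMap
      ((LinearMap.toContinuousLinearMap :
        (E →ₗ[ℝ] E) ≃ₗ[ℝ] (E →L[ℝ] E)).toLinearMap ∘ₗ br) with hbrC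
  set BC : E →L[ℝ] E →L[ℝ] ℝ :=
    LinearMap.toContinuousLinearMap
      ((LinearMap.toContinuousLinearMap :
        (E →ₗ[ℝ] ℝ) ≃ₗ[ℝ] (E →L[ℝ] ℝ)).toLinearMap ∘ₗ B) with hBC
  have hbrC' : ∀ x y, brC x y = br x y := fun x y => rfl
  have hBC' : ∀ x y, BC x y = B x y := fun x y => rfl
  have hd : ∀ (p : ℝ → E), ContDiff ℝ (⊤ : ℕ∞) p → ∀ θ, HasDerivAt p (deriv p θ) θ := by
    intro p hp θ
    exact (hp.differentiable (by simp) θ).hasDerivAt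
  have hd₁ := hd p₁ hp₁
  have hd₂ := hd p₂ hp₂
  have hd₃ := hd p₃ hp₃
  have hc₁ : Continuous p₁ := hp₁.continuous
  have hc₂ : Continuous p₂ := hp₂.continuous
  have hc₃ : Continuous p₃ := hp₃.continuous
  have hc₁' : Continuous (deriv p₁) := hp₁.continuous_deriv (by simp)
  have hc₂' : Continuous (deriv p₂) := hp₂.continuous_deriv (by simp)
  have hc₃' : Continuous (deriv p₃) := hp₃.continuous_deriv (by simp)
  -- derivatives of the brackets
  have hbr : ∀ (f g : ℝ → E), ContDiff ℝ (⊤ : ℕ∞) f → ContDiff ℝ (⊤ : ℕ∞) g → ∀ θ,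
      HasDerivAt (fun t => br (f t) (g t))
        (br (deriv f θ) (g θ) + br (f θ) (deriv g θ)) θ := by
    intro f g hf hg θ
    have := bilin_hasDerivAt brC (hd f hf θ) (hd g hg θ)
    simpa [hbrC'] using this
  have hderivbr : ∀ (f g : ℝ → E), ContDiff ℝ (⊤ : ℕ∞) f → ContDiff ℝ (⊤ : ℕ∞) g → ∀ θ,
      deriv (fun t => br (f t) (g t)) θ
        = br (deriv f θ) (g θ) + br (f θ) (deriv g θ) :=
    fun f g hf hg θ => (hbr f g hf hg θ).deriv
  -- the primitive
  set F : ℝ → ℝ := fun θ => B (p₁ θ) (br (p₂ θ) (p₃ θ)) with hF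
  -- integrands
  set i₁ : ℝ → ℝ := fun θ => B (p₁ θ) (br (deriv p₂ θ) (p₃ θ) + br (p₂ θ) (deriv p₃ θ))
      - B (deriv p₁ θ) (br (p₂ θ) (p₃ θ)) with hi₁
  set i₂ : ℝ → ℝ := fun θ => B (p₂ θ) (br (deriv p₃ θ) (p₁ θ) + br (p₃ θ) (deriv p₁ θ))
      - B (deriv p₂ θ) (br (p₃ θ) (p₁ θ)) with hi₂
  set i₃ : ℝ → ℝ := fun θ => B (p₃ θ) (br (deriv p₁ θ) (p₂ θ) + br (p₁ θ) (deriv p₂ θ))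
      - B (deriv p₃ θ) (br (p₁ θ) (p₂ θ)) with hi₃
  have hcontB : ∀ (f g : ℝ → E), Continuous f → Continuous g →
      Continuous (fun θ => B (f θ) (g θ)) := by
    intro f g hf hg
    have : Continuous (fun θ => BC (f θ) (g θ)) := by
      exact (BC.continuous₂).comp (hf.prodMk hg)
    simpa [hBC'] using this
  have hcontbr : ∀ (f g : ℝ → E), Continuous f → Continuous g →
      Continuous (fun θ => br (f θ) (g θ)) := by
    intro f g hf hg
    have : Continuous (fun θ => brC (f θ) (g θ)) := by
      exact (brC.continuous₂).comp (hf.prodMk hg)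
    simpa [hbrC'] using this
  have hci₁ : Continuous i₁ := by
    apply Continuous.sub
    · exact hcontB _ _ hc₁ ((hcontbr _ _ hc₂' hc₃).add (hcontbr _ _ hc₂ hc₃'))
    · exact hcontB _ _ hc₁' (hcontbr _ _ hc₂ hc₃)
  have hci₂ : Continuous i₂ := by
    apply Continuous.sub
    · exact hcontB _ _ hc₂ ((hcontbr _ _ hc₃' hc₁).add (hcontbr _ _ hc₃ hc₁'))
    · exact hcontB _ _ hc₂' (hcontbr _ _ hc₃ hc₁)
  have hci₃ : Continuous i₃ := by
    apply Continuous.sub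
    · exact hcontB _ _ hc₃ ((hcontbr _ _ hc₁' hc₂).add (hcontbr _ _ hc₁ hc₂'))
    · exact hcontB _ _ hc₃' (hcontbr _ _ hc₁ hc₂)
  -- F has derivative i₁ + i₂ + i₃
  have hkey : ∀ θ : ℝ, HasDerivAt F (i₁ θ + i₂ θ + i₃ θ) θ := by
    intro θ
    have h1 : HasDerivAt (fun t => br (p₂ t) (p₃ t))
        (br (deriv p₂ θ) (p₃ θ) + br (p₂ θ) (deriv p₃ θ)) θ := hbr p₂ p₃ hp₂ hp₃ θ
    have h2 : HasDerivAt F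
        (B (deriv p₁ θ) (br (p₂ θ) (p₃ θ))
          + B (p₁ θ) (br (deriv p₂ θ) (p₃ θ) + br (p₂ θ) (deriv p₃ θ))) θ := by
      have := (bilin_hasDerivAt BC (hd₁ θ) (by
        have := bilin_hasDerivAt brC (hd₂ θ) (hd₃ θ)
        simpa [hbrC'] using this))
      simpa [hF, hBC', hbrC'] using this
    convert h2 using 1
    simp only [hi₁, hi₂, hi₃, map_add]
    have e1 : B (p₂ θ) (br (deriv p₃ θ) (p₁ θ)) = B (p₁ θ) (br (p₂ θ) (deriv p₃ θ)) := by
      rw [hcyc (p₂ θ) (deriv p₃ θ) (p₁ θ), hcyc (deriv p₃ θ) (p₁ θ) (p₂ θ)]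
    have e2 : B (p₂ θ) (br (p₃ θ) (deriv p₁ θ)) = B (deriv p₁ θ) (br (p₂ θ) (p₃ θ)) := by
      rw [hcyc (p₂ θ) (p₃ θ) (deriv p₁ θ), hcyc (p₃ θ) (deriv p₁ θ) (p₂ θ)]
    have e3 : B (deriv p₂ θ) (br (p₃ θ) (p₁ θ)) = B (p₁ θ) (br (deriv p₂ θ) (p₃ θ)) := by
      rw [hcyc (deriv p₂ θ) (p₃ θ) (p₁ θ), hcyc (p₃ θ) (p₁ θ) (deriv p₂ θ)]
    have e4 : B (p₃ θ) (br (deriv p₁ θ) (p₂ θ)) = B (deriv p₁ θ) (br (p₂ θ) (p₃ θ)) := by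
      rw [hcyc (p₃ θ) (deriv p₁ θ) (p₂ θ)]
    have e5 : B (p₃ θ) (br (p₁ θ) (deriv p₂ θ)) = B (p₁ θ) (br (deriv p₂ θ) (p₃ θ)) := by
      rw [hcyc (p₃ θ) (p₁ θ) (deriv p₂ θ)]
    have e6 : B (deriv p₃ θ) (br (p₁ θ) (p₂ θ)) = B (p₁ θ) (br (p₂ θ) (deriv p₃ θ)) := by
      rw [hcyc (deriv p₃ θ) (p₁ θ) (p₂ θ)]
    linarith
  -- integrability
  have hint₁ : IntervalIntegrable i₁ MeasureTheory.volume 0 (2 * Real.pi) :=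
    hci₁.intervalIntegrable _ _
  have hint₂ : IntervalIntegrable i₂ MeasureTheory.volume 0 (2 * Real.pi) :=
    hci₂.intervalIntegrable _ _
  have hint₃ : IntervalIntegrable i₃ MeasureTheory.volume 0 (2 * Real.pi) :=
    hci₃.intervalIntegrable _ _
  -- rewrite the three phiTwo's
  have hφ₁ : phiTwo B k p₁ (fun θ => br (p₂ θ) (p₃ θ))
      = k * ∫ θ in (0:ℝ)..(2 * Real.pi), i₁ θ := by
    unfold phiTwo
    congr 1
    apply intervalIntegral.integral_congr
    intro θ _
    simp [hi₁, hderivbr p₂ p₃ hp₂ hp₃ θ]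
  have hφ₂ : phiTwo B k p₂ (fun θ => br (p₃ θ) (p₁ θ))
      = k * ∫ θ in (0:ℝ)..(2 * Real.pi), i₂ θ := by
    unfold phiTwo
    congr 1
    apply intervalIntegral.integral_congr
    intro θ _
    simp [hi₂, hderivbr p₃ p₁ hp₃ hp₁ θ]
  have hφ₃ : phiTwo B k p₃ (fun θ => br (p₁ θ) (p₂ θ))
      = k * ∫ θ in (0:ℝ)..(2 * Real.pi), i₃ θ := by
    unfold phiTwo
    congr 1
    apply intervalIntegral.integral_congr
    intro θ _
    simp [hi₃, hderivbr p₁ p₂ hp₁ hp₂ θ]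
  rw [hφ₁, hφ₂, hφ₃]
  have hsumint : (∫ θ in (0:ℝ)..(2 * Real.pi), i₁ θ)
      + (∫ θ in (0:ℝ)..(2 * Real.pi), i₂ θ)
      + (∫ θ in (0:ℝ)..(2 * Real.pi), i₃ θ)
      = ∫ θ in (0:ℝ)..(2 * Real.pi), (i₁ θ + i₂ θ + i₃ θ) := by
    rw [intervalIntegral.integral_add (hint₁.add hint₂) hint₃,
      intervalIntegral.integral_add hint₁ hint₂]
  have hFTC : (∫ θ in (0:ℝ)..(2 * Real.pi), (i₁ θ + i₂ θ + i₃ θ))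
      = F (2 * Real.pi) - F 0 := by
    apply intervalIntegral.integral_eq_sub_of_hasDerivAt
    · intro θ _
      exact hkey θ
    · exact ((hint₁.add hint₂).add hint₃)
  have hF0 : F 0 = 0 := by simp [hF, hp₁0]
  rw [← mul_add, ← mul_add, hsumint, hFTC, hF0, sub_zero]
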